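/- arXiv:2207.10325 — 2 statements merged into one kernel-verified Lean document; each statement's English description precedes it below -/
import Mathlib

section
/- Characterization (i ⇒ iii): if u* is a dual optimal solution with r_k(u*) = R_k, then for EVERY minimum-cost integral solution S of the restricted problem (every support of minimal cost containing k), all reduced costs r_j(u*) for j ∈ S, j ≠ k, vanish. -/
open Matrix

/-- Primal feasibility for the LP with partition constraints:
Ax ≥ b, Σ_{j : grp j = i} x_j = 1 for each group i, x ≥ 0. -/
def Feas {m n E : ℕ} (A : Matrix (Fin m) (Fin E) ℝ) (b : Fin m → ℝ)
    (grp : Fin E → Fin n) (x : Fin E → ℝ) : Prop :=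
  b ≤ A.mulVec x ∧ (∀ i : Fin n, (∑ j : Fin E, if grp j = i then x j else 0) = 1) ∧ 0 ≤ x

/-- A 0/1 (integral) vector. -/
def Integral {E : ℕ} (x : Fin E → ℝ) : Prop := ∀ j, x j = 0 ∨ x j = 1

/-- Dual feasibility: u_q ≥ 0 and u_{grp j} + Σ_q A_{qj} u_q ≤ c_j for each index j. -/
def DualFeas {m n E : ℕ} (A : Matrix (Fin m) (Fin E) ℝ) (c : Fin E → ℝ)
    (grp : Fin E → Fin n) (uq : Fin m → ℝ) (uv : Fin n → ℝ) : Prop :=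
  0 ≤ uq ∧ ∀ j : Fin E, uv (grp j) + (∑ q : Fin m, A q j * uq q) ≤ c j

/-- Dual objective w(u) = b·u_q + Σ_i u_i. -/
def dualObj {m n : ℕ} (b : Fin m → ℝ) (uq : Fin m → ℝ) (uv : Fin n → ℝ) : ℝ :=
  b ⬝ᵥ uq + ∑ i : Fin n, uv i

/-- Reduced cost r_j(u) = c_j − u_{grp j} − Σ_q A_{qj} u_q. -/
def rc {m n E : ℕ} (A : Matrix (Fin m) (Fin E) ℝ) (c : Fin E → ℝ)
    (grp : Fin E → Fin n) (uq : Fin m → ℝ) (uv : Fin n → ℝ) (j : Fin E) : ℝ :=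
  c j - uv (grp j) - ∑ q : Fin m, A q j * uq q

/-!
Dual feasibility makes every reduced cost nonnegative, and for a primal feasible `x` the partition
constraints turn `c ⬝ᵥ x` into `w(u) + Σ_j x_j r_j(u) + uq ⬝ᵥ (A x - b)`; hence weak duality in the
refined form `c ⬝ᵥ x ≥ w(u) + Σ_j x_j r_j(u)`. For a feasible `x` of cost `z*_{|k}` with `x_k = 1`
and a dual optimal `u` this reads `Σ_j x_j r_j(u) ≤ z*_{|k} - z* = r_k(u) = x_k r_k(u)`, so the
nonnegative terms `x_j r_j(u)` with `j ≠ k` vanish.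
-/

section PartitionLP

variable {m n E : ℕ} {A : Matrix (Fin m) (Fin E) ℝ} {b : Fin m → ℝ} {c : Fin E → ℝ}
  {grp : Fin E → Fin n} {uq : Fin m → ℝ} {uv : Fin n → ℝ}

lemma rc_nonneg (hu : DualFeas A c grp uq uv) (j : Fin E) : 0 ≤ rc A c grp uq uv j := by
  have := hu.2 j
  unfold rc
  linarith

lemma dotProduct_comp_eq_sum_of_partition {x : Fin E → ℝ}
    (hpart : ∀ i : Fin n, (∑ j : Fin E, if grp j = i then x j else 0) = 1) (v : Fin n → ℝ) :
    x ⬝ᵥ (v ∘ grp) = ∑ i, v i := by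
  rw [dotProduct, ← Finset.sum_fiberwise Finset.univ grp]
  refine Finset.sum_congr rfl fun i _ => ?_
  rw [← mul_one (v i), ← hpart i, Finset.mul_sum]
  simp only [mul_ite, mul_zero]
  rw [← Finset.sum_filter]
  refine Finset.sum_congr rfl fun j hj => ?_
  rw [Function.comp_apply, (Finset.mem_filter.mp hj).2, mul_comm]

lemma dotProduct_eq_dotProduct_rc_add {x : Fin E → ℝ}
    (hpart : ∀ i : Fin n, (∑ j : Fin E, if grp j = i then x j else 0) = 1) :
    c ⬝ᵥ x = x ⬝ᵥ rc A c grp uq uv + ∑ i, uv i + uq ⬝ᵥ (A *ᵥ x) := by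
  have hrc : rc A c grp uq uv = c - uv ∘ grp - uq ᵥ* A := by
    ext j
    simp only [rc, Pi.sub_apply, Function.comp_apply, vecMul, dotProduct, mul_comm]
  rw [hrc, dotProduct_sub, dotProduct_sub, dotProduct_comp_eq_sum_of_partition hpart,
    dotProduct_mulVec, dotProduct_comm (uq ᵥ* A), dotProduct_comm c]
  ring

theorem dualObj_add_dotProduct_rc_le {x : Fin E → ℝ} (hx : Feas A b grp x)
    (hu : DualFeas A c grp uq uv) :
    dualObj b uq uv + x ⬝ᵥ rc A c grp uq uv ≤ c ⬝ᵥ x := by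
  obtain ⟨hAx, hpart, -⟩ := hx
  have hbu : b ⬝ᵥ uq ≤ uq ⬝ᵥ (A *ᵥ x) := by
    rw [dotProduct_comm]
    exact dotProduct_le_dotProduct_of_nonneg_left hAx hu.1
  rw [dotProduct_eq_dotProduct_rc_add hpart, dualObj]
  linarith

end PartitionLP

lemma Finset.eq_zero_of_sum_le_of_nonneg {ι M : Type*} [Fintype ι] [AddCommMonoid M]
    [PartialOrder M] [IsOrderedCancelAddMonoid M] {f : ι → M} (hf : ∀ i, 0 ≤ f i)
    {k : ι} (hk : ∑ i, f i ≤ f k) {j : ι} (hjk : j ≠ k) : f j = 0 := by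
  classical
  have hpair : f j + f k ≤ ∑ i, f i := by
    rw [← Finset.sum_pair hjk]
    exact Finset.sum_le_sum_of_subset_of_nonneg (Finset.subset_univ _) fun i _ _ => hf i
  exact le_antisymm (add_le_iff_nonpos_left.mp (hpair.trans hk)) (hf j)

theorem stmt8_general {m n E : ℕ} (A : Matrix (Fin m) (Fin E) ℝ) (b : Fin m → ℝ)
    (c : Fin E → ℝ) (grp : Fin E → Fin n) (k : Fin E) (zstar zk : ℝ)
    (uq : Fin m → ℝ) (uv : Fin n → ℝ)
    (hu : DualFeas A c grp uq uv) (hopt : dualObj b uq uv = zstar)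
    (hrk : rc A c grp uq uv k = zk - zstar) :
    ∀ x : Fin E → ℝ, Feas A b grp x → Integral x → x k = 1 → c ⬝ᵥ x = zk →
      ∀ j : Fin E, j ≠ k → x j = 1 → rc A c grp uq uv j = 0 := by
  intro x hx _ hxk hcx j hjk hxj
  have hweak := dualObj_add_dotProduct_rc_le hx hu
  have hsum : ∑ i, x i * rc A c grp uq uv i ≤ x k * rc A c grp uq uv k := by
    rw [hxk, one_mul, hrk, ← hcx, ← hopt]
    simp only [dotProduct] at hweak ⊢
    linarith
  have hzero := Finset.eq_zero_of_sum_le_of_nonneg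
    (fun i => mul_nonneg (hx.2.2 i) (rc_nonneg hu i)) hsum hjk
  rwa [hxj, one_mul] at hzero

/-- Characterization (i ⇒ iii): if u* is dual optimal with r_k(u*) = R_k, then for EVERY
minimum-cost integral solution of the restricted problem (every support of minimal cost
containing k), all reduced costs r_j(u*), j ≠ k in the support, vanish. -/
theorem stmt8 {m n E : ℕ} (A : Matrix (Fin m) (Fin E) ℝ) (b : Fin m → ℝ)
    (c : Fin E → ℝ) (grp : Fin E → Fin n) (k : Fin E) (zstar zk : ℝ)
    (hz : IsLeast {z | ∃ x : Fin E → ℝ, Feas A b grp x ∧ c ⬝ᵥ x = z} zstar)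
    (hzk : IsLeast {z | ∃ x : Fin E → ℝ, Feas A b grp x ∧ x k = 1 ∧ c ⬝ᵥ x = z} zk)
    (uq : Fin m → ℝ) (uv : Fin n → ℝ)
    (hu : DualFeas A c grp uq uv) (hopt : dualObj b uq uv = zstar)
    (hrk : rc A c grp uq uv k = zk - zstar) :
    ∀ x : Fin E → ℝ, Feas A b grp x → Integral x → x k = 1 → c ⬝ᵥ x = zk →
      ∀ j : Fin E, j ≠ k → x j = 1 → rc A c grp uq uv j = 0 :=
  stmt8_general A b c grp k zstar zk uq uv hu hopt hrk
end

section
/- Incompatible indices share one dual solution: let I be a set of indices such that no two distinct elements of I belong to the same feasible integral solution (pairwise incompatible), and such that each element of I belongs to some feasible integral solution. Then there exists a single dual optimal solution u* with r_{kl}(u*) = R_{kl} for every kl ∈ I. -/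
open Matrix

/-!
Lower the costs of the indices in `I` by `R`. An integral feasible point uses at most one index
`j ∈ I`, and if it does, its original cost is at least `z* + R j`; so its lowered cost is at
least `z*`, and by ideality the lowered LP still has value `z*`. LP duality (derived from Farkas'
lemma) gives a dual solution `u` of the lowered LP of value `z*`. Since `R ≥ 0`, `u` is dual
feasible, hence optimal, for the original costs, and for `j ∈ I` its reduced cost is `R j` plus a
nonnegative lowered reduced cost. Conversely, complementary slackness against a feasible `x` with
`x j = 1` of cost `z* + R j` bounds that reduced cost by `R j`.
-/

section Farkas

variable {κ 𝕜 : Type*} [Fintype κ] [Field 𝕜] [LinearOrder 𝕜] [IsStrictOrderedRing 𝕜]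

def projAlong (a w : κ → 𝕜) : (κ → 𝕜) →ₗ[𝕜] κ → 𝕜 where
  toFun u := u - (u ⬝ᵥ w / a ⬝ᵥ w) • a
  map_add' u u' := by simp only [add_dotProduct, add_div, add_smul]; abel
  map_smul' r u := by
    simp only [smul_dotProduct, smul_eq_mul, mul_div_assoc, RingHom.id_apply]
    module

lemma projAlong_apply (a w u : κ → 𝕜) : projAlong a w u = u - (u ⬝ᵥ w / a ⬝ᵥ w) • a := rfl

lemma projAlong_dotProduct (a w u w' : κ → 𝕜) :
    projAlong a w u ⬝ᵥ w' = u ⬝ᵥ (w' - (a ⬝ᵥ w' / a ⬝ᵥ w) • w) := by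
  simp only [projAlong_apply, sub_dotProduct, dotProduct_sub, smul_dotProduct, dotProduct_smul,
    smul_eq_mul]
  ring

lemma projAlong_self {a w : κ → 𝕜} (h : a ⬝ᵥ w ≠ 0) : projAlong a w a = 0 := by
  simp [projAlong_apply, div_self h]

lemma eq_add_smul_of_projAlong_eq {a w u v : κ → 𝕜} (h : projAlong a w v = projAlong a w u) :
    v = u + ((v ⬝ᵥ w - u ⬝ᵥ w) / a ⬝ᵥ w) • a := by
  simp only [projAlong_apply] at h
  rw [sub_div]
  linear_combination (norm := module) h

theorem exists_dotProduct_nonneg_dotProduct_neg_of_notMem_cone {ι : Type*}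
    (s : Finset ι) (a : ι → κ → 𝕜) (v : κ → 𝕜)
    (h : ∀ y : ι → 𝕜, (∀ i ∈ s, 0 ≤ y i) → ∑ i ∈ s, y i • a i ≠ v) :
    ∃ x, (∀ i ∈ s, 0 ≤ a i ⬝ᵥ x) ∧ v ⬝ᵥ x < 0 := by
  classical
  induction s using Finset.induction_on generalizing a v with
  | empty =>
    have hv : v ≠ 0 := fun hv => h 0 (by simp) (by simp [hv])
    refine ⟨-v, by simp, ?_⟩
    have hvv : 0 ≤ v ⬝ᵥ v := Finset.sum_nonneg fun i _ => mul_self_nonneg (v i)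
    rw [dotProduct_neg, neg_neg_iff_pos]
    exact hvv.lt_of_ne' (dotProduct_self_eq_zero.not.2 hv)
  | insert i₀ s hi₀ ih =>
    have h' : ∀ μ : 𝕜, 0 ≤ μ → ∀ y : ι → 𝕜, (∀ i ∈ s, 0 ≤ y i) →
        ∑ i ∈ s, y i • a i + μ • a i₀ ≠ v := by
      intro μ hμ y hy
      have hupd : ∀ i ∈ s, Function.update y i₀ μ i = y i := fun i hi =>
        Function.update_of_ne (ne_of_mem_of_not_mem hi hi₀) _ _
      have hne := h (Function.update y i₀ μ) fun i hi => by
        rcases Finset.mem_insert.1 hi with rfl | hi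
        · simpa using hμ
        · simpa [hupd i hi] using hy i hi
      rwa [Finset.sum_insert hi₀, Function.update_self, add_comm,
        Finset.sum_congr rfl fun i hi => by rw [hupd i hi]] at hne
    obtain ⟨w, hw, hvw⟩ := ih a v fun y hy => by simpa using h' 0 le_rfl y hy
    by_cases ha₀ : 0 ≤ a i₀ ⬝ᵥ w
    · exact ⟨w, Finset.forall_mem_insert _ _ _ |>.2 ⟨ha₀, hw⟩, hvw⟩
    push Not at ha₀
    -- Recurse on the projections along `a i₀` onto `w⊥`; a separator `w'` of those lifts back to
    -- `w' - (a i₀ ⬝ᵥ w' / a i₀ ⬝ᵥ w) • w`, which is orthogonal to `a i₀`.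
    set P := projAlong (a i₀) w
    have hP : ∀ y : ι → 𝕜, (∀ i ∈ s, 0 ≤ y i) → ∑ i ∈ s, y i • P (a i) ≠ P v := by
      intro y hy hyv
      set u := ∑ i ∈ s, y i • a i
      have huw : 0 ≤ u ⬝ᵥ w := by
        rw [sum_dotProduct]
        exact Finset.sum_nonneg fun i hi => by
          rw [smul_dotProduct]; exact mul_nonneg (hy i hi) (hw i hi)
      refine h' _ (div_nonneg_of_nonpos (by linarith) ha₀.le) y hy
        (eq_add_smul_of_projAlong_eq ?_).symm
      simpa [u, map_sum, map_smul] using hyv.symm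
    obtain ⟨w', hw', hvw'⟩ := ih (fun i => P (a i)) (P v) hP
    refine ⟨w' - (a i₀ ⬝ᵥ w' / a i₀ ⬝ᵥ w) • w, ?_, ?_⟩
    · refine Finset.forall_mem_insert _ _ _ |>.2 ⟨?_, fun i hi => ?_⟩
      · rw [← projAlong_dotProduct, projAlong_self ha₀.ne, zero_dotProduct]
      · rw [← projAlong_dotProduct]; exact hw' i hi
    · rw [← projAlong_dotProduct]; exact hvw'

end Farkas

section Augment

variable {κ R : Type*}

def augment (u : κ → R) (s : R) : Option κ → R := fun o => o.elim s u

@[simp] lemma augment_none (u : κ → R) (s : R) : augment u s none = s := rfl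

@[simp] lemma augment_some (u : κ → R) (s : R) (k : κ) : augment u s (some k) = u k := rfl

lemma eq_augment (x : Option κ → R) : x = augment (x ∘ some) (x none) := by
  ext (_ | _) <;> rfl

lemma augment_dotProduct_augment [Fintype κ] [CommSemiring R] (u x : κ → R) (s t : R) :
    augment u s ⬝ᵥ augment x t = u ⬝ᵥ x + s * t := by
  simp [dotProduct, Fintype.sum_option, add_comm]

end Augment

section LPDuality

variable {ι κ 𝕜 : Type*} [Fintype ι] [Fintype κ] [Field 𝕜] [LinearOrder 𝕜] [IsStrictOrderedRing 𝕜]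

theorem exists_dual_of_forall_le_dotProduct (M : Matrix ι κ 𝕜) (d : ι → 𝕜) (c : κ → 𝕜) (z : 𝕜)
    (hfeas : ∃ x, d ≤ M *ᵥ x) (hz : ∀ x, d ≤ M *ᵥ x → z ≤ c ⬝ᵥ x) :
    ∃ y, 0 ≤ y ∧ y ᵥ* M = c ∧ z ≤ d ⬝ᵥ y := by
  by_contra hno
  -- Farkas for the generators `(M i, d i)`, `(0, -1)` and the target `(c, z)`; the extra
  -- coordinate is `none`. The separating `(x, t)` has `t ≤ 0`.
  obtain ⟨x, hx, hcx⟩ := exists_dotProduct_nonneg_dotProduct_neg_of_notMem_cone Finset.univ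
    (fun i : Option ι => i.elim (augment 0 (-1)) fun i => augment (M i) (d i)) (augment c z) <| by
    intro y hy hyc
    refine hno ⟨y ∘ some, fun i => hy _ (Finset.mem_univ _), ?_, ?_⟩
    · ext k
      simpa [vecMul, dotProduct, Fintype.sum_option, Finset.sum_apply] using congrFun hyc (some k)
    · have := congrFun hyc none
      simp only [Finset.sum_apply, Pi.smul_apply, smul_eq_mul, Fintype.sum_option, Option.elim_none,
        augment_none, mul_neg, mul_one, Option.elim_some] at this
      rw [← this]
      simp only [dotProduct, Function.comp_apply, mul_comm (d _)]
      linarith [hy none (Finset.mem_univ _)]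
  obtain ⟨x, t, rfl⟩ : ∃ x' t, x = augment x' t := ⟨_, _, eq_augment x⟩
  simp only [Finset.mem_univ, forall_const, Option.forall, Option.elim_none, Option.elim_some,
    augment_dotProduct_augment, zero_dotProduct, zero_add, neg_one_mul, neg_nonneg] at hx hcx
  obtain ⟨ht, hrow⟩ := hx
  change ∀ i, 0 ≤ (M *ᵥ x) i + d i * t at hrow
  rcases ht.lt_or_eq with ht | rfl
  · have hpos : 0 < -t := neg_pos.2 ht
    refine (hz ((-t)⁻¹ • x) fun i => ?_).not_gt ?_
    · rw [mulVec_smul, Pi.smul_apply, smul_eq_mul, le_inv_mul_iff₀ hpos]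
      linarith [hrow i]
    · rw [dotProduct_smul, smul_eq_mul, inv_mul_lt_iff₀ hpos]
      linarith
  · -- `x` is a recession direction of negative cost
    obtain ⟨x₀, hx₀⟩ := hfeas
    simp only [mul_zero, add_zero] at hrow hcx
    set μ := (c ⬝ᵥ x₀ - z + 1) / -(c ⬝ᵥ x)
    have hμ : 0 ≤ μ := div_nonneg (by linarith [hz x₀ hx₀]) (by linarith)
    refine (hz (x₀ + μ • x) fun i => ?_).not_gt ?_
    · rw [mulVec_add, mulVec_smul, Pi.add_apply, Pi.smul_apply, smul_eq_mul]
      linarith [hx₀ i, mul_nonneg hμ (hrow i)]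
    · rw [dotProduct_add, dotProduct_smul, smul_eq_mul, div_mul_eq_mul_div,
        div_neg, mul_div_assoc, div_self hcx.ne]
      linarith

end LPDuality

section GroupMatrix

variable {ι κ : Type*} [DecidableEq ι] (grp : κ → ι)

def groupMatrix : Matrix ι κ ℝ := Matrix.of fun i j => if grp j = i then 1 else 0

lemma groupMatrix_mulVec_apply [Fintype κ] (x : κ → ℝ) (i : ι) :
    (groupMatrix grp *ᵥ x) i = ∑ j, if grp j = i then x j else 0 := by
  simp [groupMatrix, mulVec, dotProduct, ite_mul]

lemma vecMul_groupMatrix [Fintype ι] (u : ι → ℝ) : u ᵥ* groupMatrix grp = u ∘ grp := by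
  ext j
  simp [groupMatrix, vecMul, dotProduct, mul_ite]

end GroupMatrix

section PartitionLP

variable {m n E : ℕ} {A : Matrix (Fin m) (Fin E) ℝ} {b : Fin m → ℝ} {c : Fin E → ℝ}
  {grp : Fin E → Fin n} {uq : Fin m → ℝ} {uv : Fin n → ℝ} {x : Fin E → ℝ}

variable (A b grp) in
def feasMatrix : Matrix (Fin m ⊕ Fin n ⊕ Fin n ⊕ Fin E) (Fin E) ℝ :=
  fromRows A (fromRows (groupMatrix grp) (fromRows (-groupMatrix grp) 1))

variable (b) in
def feasRhs : Fin m ⊕ Fin n ⊕ Fin n ⊕ Fin E → ℝ :=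
  Sum.elim b (Sum.elim 1 (Sum.elim (-1) 0))

lemma feas_iff_le_mulVec :
    Feas A b grp x ↔ feasRhs (n := n) (E := E) b ≤ feasMatrix A grp *ᵥ x := by
  have hG : (∀ i, (∑ j, if grp j = i then x j else 0) = 1) ↔ groupMatrix grp *ᵥ x = 1 := by
    simp only [funext_iff, groupMatrix_mulVec_apply, Pi.one_apply]
  rw [Feas, hG, le_antisymm_iff]
  simp only [feasRhs, feasMatrix, fromRows_mulVec, Sum.elim_le_elim_iff, neg_mulVec, one_mulVec,
    neg_le_neg_iff]
  tauto

lemma rc_eq_sub_vecMul : rc A c grp uq uv = c - uv ᵥ* groupMatrix grp - uq ᵥ* A := by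
  ext j
  simp [rc, vecMul_groupMatrix, vecMul, dotProduct, mul_comm]

lemma dualFeas_iff : DualFeas A c grp uq uv ↔ 0 ≤ uq ∧ ∀ j, 0 ≤ rc A c grp uq uv j := by
  simp only [DualFeas, rc, sub_sub, sub_nonneg]

theorem exists_dualFeas_le_dualObj (z : ℝ) (hfeas : ∃ x, Feas A b grp x)
    (hz : ∀ x, Feas A b grp x → z ≤ c ⬝ᵥ x) :
    ∃ uq uv, DualFeas A c grp uq uv ∧ z ≤ dualObj b uq uv := by
  simp only [feas_iff_le_mulVec] at hfeas hz
  obtain ⟨y, hy, hyc, hzy⟩ := exists_dual_of_forall_le_dotProduct _ _ c z hfeas hz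
  -- `uv` is the difference of the multipliers of `groupMatrix grp *ᵥ x ≥ 1` and `≤ 1`
  refine ⟨y ∘ Sum.inl, y ∘ Sum.inr ∘ Sum.inl - y ∘ Sum.inr ∘ Sum.inr ∘ Sum.inl,
    dualFeas_iff.2 ⟨fun q => hy _, fun j => ?_⟩, ?_⟩
  · simp only [feasMatrix, vecMul_fromRows, vecMul_neg, vecMul_one] at hyc
    rw [rc_eq_sub_vecMul, ← hyc, sub_vecMul]
    simp only [Function.comp_assoc, Pi.add_apply, Pi.sub_apply, Pi.neg_apply, Function.comp_apply]
    have hs : 0 ≤ y (Sum.inr (Sum.inr (Sum.inr j))) := hy _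
    linarith
  · simpa [feasRhs, dualObj, dotProduct, Fintype.sum_sum_type, dotProduct_comm b,
      Finset.sum_sub_distrib, ← sub_eq_add_neg] using hzy

lemma dotProduct_sub_dualObj (hx : Feas A b grp x) :
    c ⬝ᵥ x - dualObj b uq uv = rc A c grp uq uv ⬝ᵥ x + uq ⬝ᵥ (A *ᵥ x - b) := by
  have hG : groupMatrix grp *ᵥ x = 1 := funext fun i => by
    rw [groupMatrix_mulVec_apply, hx.2.1 i, Pi.one_apply]
  simp only [rc_eq_sub_vecMul, sub_dotProduct, ← dotProduct_mulVec, hG, dotProduct_one, dualObj,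
    dotProduct_sub, dotProduct_comm b]
  ring

lemma dualObj_le_dotProduct (hu : DualFeas A c grp uq uv) (hx : Feas A b grp x) :
    dualObj b uq uv ≤ c ⬝ᵥ x := by
  rw [dualFeas_iff] at hu
  have hcs := dotProduct_sub_dualObj (c := c) (uq := uq) (uv := uv) hx
  have h₁ : 0 ≤ rc A c grp uq uv ⬝ᵥ x := dotProduct_nonneg_of_nonneg hu.2 hx.2.2
  have h₂ : 0 ≤ uq ⬝ᵥ (A *ᵥ x - b) := dotProduct_nonneg_of_nonneg hu.1 (sub_nonneg.2 hx.1)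
  linarith

lemma rc_le_dotProduct_sub_dualObj (hu : DualFeas A c grp uq uv) (hx : Feas A b grp x) {j : Fin E}
    (hxj : x j = 1) : rc A c grp uq uv j ≤ c ⬝ᵥ x - dualObj b uq uv := by
  rw [dualFeas_iff] at hu
  have h₁ : rc A c grp uq uv j ≤ rc A c grp uq uv ⬝ᵥ x := by
    simpa [hxj, dotProduct] using Finset.single_le_sum (fun j _ => mul_nonneg (hu.2 j) (hx.2.2 j))
      (Finset.mem_univ j)
  have h₂ : 0 ≤ uq ⬝ᵥ (A *ᵥ x - b) := dotProduct_nonneg_of_nonneg hu.1 (sub_nonneg.2 hx.1)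
  rw [dotProduct_sub_dualObj hx]
  linarith

lemma DualFeas.mono {c' : Fin E → ℝ} (hu : DualFeas A c grp uq uv) (hc : c ≤ c') :
    DualFeas A c' grp uq uv :=
  ⟨hu.1, fun j => (hu.2 j).trans (hc j)⟩

lemma rc_sub (δ : Fin E → ℝ) (j : Fin E) :
    rc A (c - δ) grp uq uv j = rc A c grp uq uv j - δ j := by
  simp only [rc, Pi.sub_apply]
  ring

lemma le_dotProduct_sub_indicator_of_integral {I : Finset (Fin E)} {R : Fin E → ℝ} {z : ℝ}
    (hz : ∀ x, Feas A b grp x → z ≤ c ⬝ᵥ x)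
    (hR : ∀ j ∈ I, ∀ x, Feas A b grp x → x j = 1 → z + R j ≤ c ⬝ᵥ x)
    (hinc : ∀ x, Feas A b grp x → Integral x → ∀ j ∈ I, ∀ j' ∈ I, x j = 1 → x j' = 1 → j = j')
    (hx : Feas A b grp x) (hint : Integral x) :
    z ≤ (c - (I : Set (Fin E)).indicator R) ⬝ᵥ x := by
  rw [sub_dotProduct]
  by_cases h : ∃ j₀ ∈ I, x j₀ = 1
  · obtain ⟨j₀, hj₀, hxj₀⟩ := h
    have hRx : (I : Set (Fin E)).indicator R ⬝ᵥ x = R j₀ := by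
      rw [dotProduct, Finset.sum_eq_single j₀ (fun j _ hj => ?_) (by simp)]
      · simp [hj₀, hxj₀]
      by_cases hjI : j ∈ I
      · have hxj : x j = 0 :=
          (hint j).resolve_right fun hxj => hj (hinc x hx hint j hjI j₀ hj₀ hxj hxj₀)
        simp [hxj]
      · simp [hjI]
    linarith [hR j₀ hj₀ x hx hxj₀]
  · push Not at h
    have hRx : (I : Set (Fin E)).indicator R ⬝ᵥ x = 0 := Finset.sum_eq_zero fun j _ => by
      by_cases hjI : j ∈ I
      · simp [(hint j).resolve_right (h j hjI)]
      · simp [hjI]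
    linarith [hz x hx]

end PartitionLP

theorem stmt11_general {m n E : ℕ} (A : Matrix (Fin m) (Fin E) ℝ) (b : Fin m → ℝ)
    (c : Fin E → ℝ) (grp : Fin E → Fin n) (zstar : ℝ)
    (hz : IsLeast {z | ∃ x : Fin E → ℝ, Feas A b grp x ∧ c ⬝ᵥ x = z} zstar)
    (hideal : ∀ c' : Fin E → ℝ, (∃ x0 : Fin E → ℝ, Feas A b grp x0) →
      ∃ xt : Fin E → ℝ, Feas A b grp xt ∧ Integral xt ∧
        ∀ y : Fin E → ℝ, Feas A b grp y → c' ⬝ᵥ xt ≤ c' ⬝ᵥ y)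
    (I : Finset (Fin E))
    (hinc : ∀ x : Fin E → ℝ, Feas A b grp x → Integral x →
      ∀ j ∈ I, ∀ j' ∈ I, x j = 1 → x j' = 1 → j = j')
    (R : Fin E → ℝ)
    (hR : ∀ j ∈ I,
      IsLeast {z | ∃ x : Fin E → ℝ, Feas A b grp x ∧ x j = 1 ∧ c ⬝ᵥ x = z}
        (zstar + R j)) :
    ∃ (uq : Fin m → ℝ) (uv : Fin n → ℝ),
      DualFeas A c grp uq uv ∧ dualObj b uq uv = zstar ∧
      ∀ j ∈ I, rc A c grp uq uv j = R j := by
  obtain ⟨⟨xs, hxs, hcxs⟩, hzlow⟩ := hz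
  have hlow : ∀ x, Feas A b grp x → zstar ≤ c ⬝ᵥ x := fun x hx => hzlow ⟨x, hx, rfl⟩
  have hRlow : ∀ j ∈ I, ∀ x, Feas A b grp x → x j = 1 → zstar + R j ≤ c ⬝ᵥ x :=
    fun j hj x hx hxj => (hR j hj).2 ⟨x, hx, hxj, rfl⟩
  have hRnn : 0 ≤ (I : Set (Fin E)).indicator R := Set.indicator_nonneg fun j hj => by
    obtain ⟨x, hx, -, hcx⟩ := (hR j hj).1
    linarith [hlow x hx]
  obtain ⟨xt, hxt, hint, hopt⟩ := hideal (c - (I : Set (Fin E)).indicator R) ⟨xs, hxs⟩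
  obtain ⟨uq, uv, hu, hobj⟩ := exists_dualFeas_le_dualObj zstar ⟨xs, hxs⟩ fun y hy =>
    (le_dotProduct_sub_indicator_of_integral hlow hRlow hinc hxt hint).trans (hopt y hy)
  have hu' : DualFeas A c grp uq uv := hu.mono (sub_le_self c hRnn)
  have hobj' : dualObj b uq uv = zstar := (hcxs ▸ dualObj_le_dotProduct hu' hxs).antisymm hobj
  refine ⟨uq, uv, hu', hobj', fun j hj => le_antisymm ?_ ?_⟩
  · obtain ⟨x, hx, hxj, hcx⟩ := (hR j hj).1
    linarith [rc_le_dotProduct_sub_dualObj hu' hx hxj]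
  · have := (dualFeas_iff.1 hu).2 j
    rw [rc_sub, Set.indicator_of_mem (Finset.mem_coe.2 hj)] at this
    linarith

/-- Incompatible indices share one dual solution: if I is a set of pairwise incompatible
indices (no two distinct elements of I belong to the same feasible integral solution),
each element of which belongs to some feasible integral solution, then there exists a
single dual optimal solution u* with r_{kl}(u*) = R_{kl} for every kl ∈ I. -/
theorem stmt11 {m n E : ℕ} (A : Matrix (Fin m) (Fin E) ℝ) (b : Fin m → ℝ)
    (c : Fin E → ℝ) (grp : Fin E → Fin n) (zstar : ℝ)
    (hz : IsLeast {z | ∃ x : Fin E → ℝ, Feas A b grp x ∧ c ⬝ᵥ x = z} zstar)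
    (hideal : ∀ c' : Fin E → ℝ, (∃ x0 : Fin E → ℝ, Feas A b grp x0) →
      ∃ xt : Fin E → ℝ, Feas A b grp xt ∧ Integral xt ∧
        ∀ y : Fin E → ℝ, Feas A b grp y → c' ⬝ᵥ xt ≤ c' ⬝ᵥ y)
    (I : Finset (Fin E))
    (hinc : ∀ x : Fin E → ℝ, Feas A b grp x → Integral x →
      ∀ j ∈ I, ∀ j' ∈ I, x j = 1 → x j' = 1 → j = j')
    (hmem : ∀ j ∈ I, ∃ x : Fin E → ℝ, Feas A b grp x ∧ Integral x ∧ x j = 1)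
    (R : Fin E → ℝ)
    (hR : ∀ j ∈ I,
      IsLeast {z | ∃ x : Fin E → ℝ, Feas A b grp x ∧ x j = 1 ∧ c ⬝ᵥ x = z}
        (zstar + R j)) :
    ∃ (uq : Fin m → ℝ) (uv : Fin n → ℝ),
      DualFeas A c grp uq uv ∧ dualObj b uq uv = zstar ∧
      ∀ j ∈ I, rc A c grp uq uv j = R j :=
  stmt11_general A b c grp zstar hz hideal I hinc R hR
end
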